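/- Let X be a proper dotted metric space (a metric space in which all distances are integers and every ball is a finite set). Let K ≥ 1, ε ≥ 0, and let G be a set of (K,ε)-quasi-isometries of X that is closed in the compact-open topology and for which there exist a point x ∈ X and a constant C ≥ 0 with d(x, g(x)) ≤ C for every g ∈ G. Then G is compact in the compact-open topology. -/

import Mathlib

noncomputable section
open scoped NNReal ENNReal

/-- A `(K, ε)`-quasi-isometry between two (pseudo)distance functions: coarsely bi-Lipschitz
with `ε`-dense image. -/
def IsQuasiIsometryDist {α β : Type*} (d₁ : α → α → ℝ) (d₂ : β → β → ℝ) (K ε : ℝ)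
    (f : α → β) : Prop :=
  (∀ x y, d₁ x y / K - ε ≤ d₂ (f x) (f y) ∧ d₂ (f x) (f y) ≤ K * d₁ x y + ε) ∧
    ∀ z, ∃ x, d₂ z (f x) ≤ ε

/-- Two self maps are at bounded distance from each other. -/
def BoundedDistEquiv {α : Type*} (d : α → α → ℝ) (f g : α → α) : Prop :=
  ∃ C : ℝ, ∀ x, d (f x) (g x) ≤ C

/-- The Gromov product of `x` and `y` with respect to the basepoint `b`. -/
def gromovProd {α : Type*} (d : α → α → ℝ) (x y b : α) : ℝ := (d x b + d y b - d x y) / 2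

/-- Gromov hyperbolicity (four-point condition) of a distance function. -/
def IsGromovHyperbolicDist {α : Type*} (d : α → α → ℝ) (δ : ℝ) : Prop :=
  ∀ x y z b, min (gromovProd d x z b) (gromovProd d z y b) - δ ≤ gromovProd d x y b

/-- The Cayley graph of a group with respect to a generating set `S`. -/
def cayleyGraph (G : Type*) [Group G] (S : Set G) : SimpleGraph G :=
  SimpleGraph.fromRel (fun g h => g⁻¹ * h ∈ S)

/-- The word metric on a group `G` with respect to a generating set `S`, as a real valued
distance function (the graph metric of the Cayley graph). -/
noncomputable def wordDist (G : Type*) [Group G] (S : Set G) (g h : G) : ℝ :=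
  ((cayleyGraph G S).dist g h : ℝ)
/-- A dotted metric space: all distances are integers. -/
def IsDotted (X : Type*) [MetricSpace X] : Prop := ∀ x y : X, ∃ n : ℤ, dist x y = (n : ℝ)

/-- A proper dotted metric space: every ball is a finite set. -/
def IsProperDotted (X : Type*) [MetricSpace X] : Prop :=
  (∀ x y : X, ∃ n : ℤ, dist x y = (n : ℝ)) ∧
    ∀ (x : X) (r : ℝ), (Metric.closedBall x r).Finite

/-! Integer distances make `X` discrete, so the compact-open topology on `C(X, X)` is the product
topology on `X → X`. By the coarse Lipschitz bound, every `g ∈ G` sends `y` into the finite ball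
of radius `C + K d(x, y) + ε` about `x`; hence `G` is a closed subset of a product of finite sets,
which is compact by Tychonoff. -/

open Metric

theorem IsDotted.discreteTopology {X : Type*} [MetricSpace X] (hX : IsDotted X) :
    DiscreteTopology X :=
  .of_forall_le_dist one_pos fun a b hab => by
    obtain ⟨n, hn⟩ := hX a b
    have hpos : (0 : ℝ) < n := hn ▸ dist_pos.2 hab
    rw [hn]
    exact_mod_cast (show (0 : ℤ) < n by exact_mod_cast hpos)

theorem ContinuousMap.isCompact_setOf_forall_mem_of_discreteTopology {X Y : Type*}
    [TopologicalSpace X] [DiscreteTopology X] [TopologicalSpace Y] {s : X → Set Y}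
    (hs : ∀ x, IsCompact (s x)) : IsCompact {f : C(X, Y) | ∀ x, f x ∈ s x} := by
  simpa [Set.preimage, Set.pi] using
    ContinuousMap.homeoFnOfDiscrete.isCompact_preimage.2 (isCompact_univ_pi hs)

theorem IsQuasiIsometryDist.dist_apply_le {X : Type*} [PseudoMetricSpace X] {K ε : ℝ}
    {f : X → X} (hf : IsQuasiIsometryDist dist dist K ε f) (x y : X) :
    dist x (f y) ≤ dist x (f x) + K * dist x y + ε := by
  linarith [dist_triangle x (f x) (f y), (hf.1 x y).2]

theorem closed_boundedOrbit_set_of_uniform_quasiIsometries_isCompact_general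
    {X : Type*} [MetricSpace X] (hX : IsProperDotted X)
    (K ε : ℝ)
    (G : Set C(X, X))
    (hQI : ∀ g ∈ G, IsQuasiIsometryDist (dist : X → X → ℝ) dist K ε g)
    (hclosed : IsClosed G)
    (x : X) (C : ℝ)
    (hbound : ∀ g ∈ G, dist x (g x) ≤ C) :
    IsCompact G := by
  have : DiscreteTopology X := IsDotted.discreteTopology hX.1
  have hballs : IsCompact {f : C(X, X) | ∀ y, f y ∈ closedBall x (C + K * dist x y + ε)} :=
    ContinuousMap.isCompact_setOf_forall_mem_of_discreteTopology fun y =>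
      (hX.2 x _).isCompact
  refine hballs.of_isClosed_subset hclosed fun g hg y => mem_closedBall'.2 ?_
  linarith [(hQI g hg).dist_apply_le x y, hbound g hg]

/-- A set of `(K, ε)`-quasi-isometries of a proper dotted metric space which is
closed in the compact-open topology and moves some point a uniformly bounded amount is compact
in the compact-open topology. -/
theorem closed_boundedOrbit_set_of_uniform_quasiIsometries_isCompact
    {X : Type*} [MetricSpace X] (hX : IsProperDotted X)
    (K ε : ℝ) (hK : 1 ≤ K) (hε : 0 ≤ ε)
    (G : Set C(X, X))
    (hQI : ∀ g ∈ G, IsQuasiIsometryDist (dist : X → X → ℝ) dist K ε g)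
    (hclosed : IsClosed G)
    (x : X) (C : ℝ) (hC : 0 ≤ C)
    (hbound : ∀ g ∈ G, dist x (g x) ≤ C) :
    IsCompact G :=
  closed_boundedOrbit_set_of_uniform_quasiIsometries_isCompact_general hX K ε G hQI hclosed x C
    hbound
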